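/- Let t, z be integers with 2 ≤ t < z and let K↔_{t,z} be the complete bipartite digraph with parts of sizes t and z. Then λ_k^c(K↔_{t,z}) = t for every integer k with 2 ≤ k ≤ t, and λ_k^c(K↔_{t,z}) = 0 for every integer k with t + 1 ≤ k ≤ t + z. -/

import Mathlib

/-- A directed cycle in a digraph `D`, represented by its (nonempty, duplicate-free)
list of vertices in cyclic order; consecutive vertices (cyclically) are joined by arcs. -/
def IsDiCycle {V : Type*} (D : Digraph V) (l : List V) : Prop :=
  l.Nodup ∧ 2 ≤ l.length ∧ ∀ p ∈ l.zip (l.rotate 1), D.Adj p.1 p.2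

/-- The set of arcs traversed by a cycle given by the vertex list `l`. -/
def cycArcs {V : Type*} (l : List V) : Set (V × V) :=
  {p | p ∈ l.zip (l.rotate 1)}

/-- An `S`-cycle: a directed cycle whose vertex set contains `S`. -/
def IsSCycle {V : Type*} (D : Digraph V) (S : Set V) (l : List V) : Prop :=
  IsDiCycle D l ∧ ∀ s ∈ S, s ∈ l

/-- `D` contains `m` pairwise arc-disjoint `S`-cycles. -/
def ArcDisjointSCycles {V : Type*} (D : Digraph V) (S : Set V) (m : ℕ) : Prop :=
  ∃ f : Fin m → List V, (∀ i, IsSCycle D S (f i)) ∧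
    ∀ i j, i ≠ j → Disjoint (cycArcs (f i)) (cycArcs (f j))

/-- `λ_S^c(D)`: the maximum number of pairwise arc-disjoint `S`-cycles in `D`. -/
noncomputable def lambdaS {V : Type*} (D : Digraph V) (S : Set V) : ℕ :=
  sSup {m | ArcDisjointSCycles D S m}

/-- `λ_k^c(D)`: the directed cycle `k`-arc-connectivity of `D`, the minimum of
`λ_S^c(D)` over all vertex subsets `S` of size `k`. -/
noncomputable def lambdaK {V : Type*} [Fintype V] (D : Digraph V) (k : ℕ) : ℕ :=
  sInf {m | ∃ S : Finset V, S.card = k ∧ lambdaS D ↑S = m}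

/-- The complete bipartite digraph with parts `Fin t` and `Fin z`: there is an arc
between any two vertices lying in distinct parts. -/
def completeBipartiteDigraph (t z : ℕ) : Digraph (Fin t ⊕ Fin z) :=
  ⟨fun u v => u.isLeft ≠ v.isLeft⟩

/-! Every arc leaving a right vertex enters the left part, which has `t` vertices. Hence at
most `t` arc-disjoint cycles pass through a right vertex, and, the successor map of a cycle
being injective, a cycle contains at most `t` right vertices: a set with `t + 1` right vertices
lies on no cycle at all. Conversely, if `|S| ≤ t`, choose distinct right vertices
`y 0, …, y (t - 1)` covering the right part of `S` (possible as `t ≤ z`); for `j : Fin t` the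
cycles `y 0, j, y 1, 1 + j, …, y (t - 1), (t - 1) + j` run through the whole left part and are
pairwise arc-disjoint. -/

section Cycles

variable {V : Type*} {D : Digraph V}

lemma mem_cycArcs_next [DecidableEq V] {l : List V} (hl : l.Nodup) {x : V} (hx : x ∈ l) :
    (x, l.next x hx) ∈ cycArcs l := by
  obtain ⟨i, hi, rfl⟩ := List.getElem_of_mem hx
  refine List.mem_iff_getElem.mpr ⟨i, by simpa using hi, ?_⟩
  rw [List.getElem_zip, List.getElem_rotate, List.next_getElem _ hl]

lemma IsDiCycle.adj_next [DecidableEq V] {l : List V} (hl : IsDiCycle D l) {x : V}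
    (hx : x ∈ l) : D.Adj x (l.next x hx) :=
  hl.2.2 _ (mem_cycArcs_next hl.1 hx)

lemma IsDiCycle.card_le_card_of_adj {l : List V} (hl : IsDiCycle D l) {A B : Finset V}
    (hA : ∀ x ∈ A, x ∈ l) (hB : ∀ x ∈ A, ∀ w, D.Adj x w → w ∈ B) :
    A.card ≤ B.card := by
  classical
  refine Finset.card_le_card_of_injOn (fun x => if hx : x ∈ l then l.next x hx else x)
    (fun x hx => ?_) (fun x hx y hy hxy => ?_)
  · simpa [hA x hx] using hB x hx _ (hl.adj_next (hA x hx))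
  · simp only [hA x hx, hA y hy, dite_true] at hxy
    rw [← l.prev_next hl.1 x (hA x hx), ← l.prev_next hl.1 y (hA y hy)]
    simp only [hxy]

lemma ArcDisjointSCycles.le_card_of_adj {S : Set V} {m : ℕ} {v : V}
    {B : Finset V} (h : ArcDisjointSCycles D S m) (hv : v ∈ S)
    (hB : ∀ w, D.Adj v w → w ∈ B) : m ≤ B.card := by
  classical
  obtain ⟨f, hf, hdisj⟩ := h
  have hvf (i : Fin m) : v ∈ f i := (hf i).2 v hv
  calc m = (Finset.univ : Finset (Fin m)).card := (Finset.card_fin m).symm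
    _ ≤ B.card := by
      refine Finset.card_le_card_of_injOn (fun i => (f i).next v (hvf i))
        (fun i _ => hB _ ((hf i).1.adj_next (hvf i))) (fun i _ j _ hij => ?_)
      by_contra hne
      refine Set.disjoint_left.mp (hdisj i j hne) (mem_cycArcs_next (hf i).1.1 (hvf i)) ?_
      rw [show (f i).next v (hvf i) = (f j).next v (hvf j) from hij]
      exact mem_cycArcs_next (hf j).1.1 (hvf j)

lemma lambdaS_le_card_of_adj {S : Set V} {v : V} {B : Finset V}
    (hv : v ∈ S) (hB : ∀ w, D.Adj v w → w ∈ B) : lambdaS D S ≤ B.card :=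
  csSup_le' fun _ hm => ArcDisjointSCycles.le_card_of_adj hm hv hB

lemma le_lambdaS [Fintype V] {S : Set V} {m : ℕ} {v : V}
    (hv : v ∈ S) (h : ArcDisjointSCycles D S m) : m ≤ lambdaS D S :=
  le_csSup ⟨Finset.univ.card, fun _ hm => hm.le_card_of_adj hv fun w _ => Finset.mem_univ w⟩ h

lemma lambdaS_eq_zero {S : Set V} (h : ∀ l, ¬ IsSCycle D S l) : lambdaS D S = 0 :=
  Nat.le_zero.mp <| csSup_le' fun _ ⟨_, hf, _⟩ =>
    Nat.le_zero.mpr <| by_contra fun hm => h _ (hf ⟨0, Nat.pos_of_ne_zero hm⟩)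

lemma lambdaK_eq [Fintype V] {k m : ℕ}
    (hle : ∃ S : Finset V, S.card = k ∧ lambdaS D ↑S ≤ m)
    (hge : ∀ S : Finset V, S.card = k → m ≤ lambdaS D ↑S) : lambdaK D k = m := by
  obtain ⟨S, hSk, hSm⟩ := hle
  unfold lambdaK
  refine le_antisymm (le_trans (Nat.sInf_le ⟨S, hSk, rfl⟩) hSm) ?_
  refine le_csInf ⟨lambdaS D ↑S, S, hSk, rfl⟩ ?_
  rintro _ ⟨S', hS'k, rfl⟩
  exact hge S' hS'k

end Cycles

lemma mem_cycArcs_ofFn {α : Type*} {n : ℕ} [NeZero n] (f : Fin n → α) {p : α × α} :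
    p ∈ cycArcs (List.ofFn f) ↔ ∃ i : Fin n, p = (f i, f (i + 1)) := by
  have hlen : ((List.ofFn f).zip ((List.ofFn f).rotate 1)).length = n := by simp
  have hsucc (i : Fin n) : (i + 1 : Fin n) = ⟨(i + 1) % n, Nat.mod_lt _ i.pos⟩ := by
    ext; simp [Fin.val_add, Nat.add_mod_mod]
  simp only [cycArcs, Set.mem_ofPred_eq, List.mem_iff_getElem, hlen, List.getElem_zip,
    List.getElem_rotate, List.getElem_ofFn, List.length_ofFn, hsucc]
  constructor
  · rintro ⟨i, hi, rfl⟩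
    exact ⟨⟨i, hi⟩, rfl⟩
  · rintro ⟨i, rfl⟩
    exact ⟨i, i.isLt, rfl⟩

section Interleave

variable {α : Type*} {n : ℕ}

/-- The sequence `a 0, b 0, a 1, b 1, …, a (n - 1), b (n - 1)`. -/
def interleave (a b : Fin n → α) (m : Fin (2 * n)) : α :=
  if (m : ℕ) % 2 = 0 then a ⟨m / 2, by omega⟩ else b ⟨m / 2, by omega⟩

lemma Fin.exists_eq_two_mul_or_eq_two_mul_add_one (m : Fin (2 * n)) :
    ∃ i : Fin n, m = ⟨2 * i, by omega⟩ ∨ m = ⟨2 * i + 1, by omega⟩ :=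
  ⟨⟨m / 2, by omega⟩, by simp only [Fin.ext_iff]; omega⟩

variable (a b : Fin n → α)

@[simp]
lemma interleave_two_mul (i : Fin n) : interleave a b ⟨2 * i, by omega⟩ = a i := by
  simp [interleave]

@[simp]
lemma interleave_two_mul_add_one (i : Fin n) :
    interleave a b ⟨2 * i + 1, by omega⟩ = b i := by
  simp [interleave, Nat.add_mod, Nat.add_div]

lemma range_interleave : Set.range (interleave a b) = Set.range a ∪ Set.range b := by
  ext x
  constructor
  · rintro ⟨m, rfl⟩
    obtain ⟨i, rfl | rfl⟩ := Fin.exists_eq_two_mul_or_eq_two_mul_add_one m <;> simp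
  · rintro (⟨i, rfl⟩ | ⟨i, rfl⟩)
    exacts [⟨_, interleave_two_mul a b i⟩, ⟨_, interleave_two_mul_add_one a b i⟩]

variable {a b}

lemma interleave_injective (ha : a.Injective) (hb : b.Injective) (hab : ∀ i j, a i ≠ b j) :
    (interleave a b).Injective := by
  intro m m' h
  obtain ⟨i, rfl | rfl⟩ := Fin.exists_eq_two_mul_or_eq_two_mul_add_one m <;>
  obtain ⟨j, rfl | rfl⟩ := Fin.exists_eq_two_mul_or_eq_two_mul_add_one m' <;>
  simp only [interleave_two_mul, interleave_two_mul_add_one] at h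
  · rw [ha h]
  · exact absurd h (hab i j)
  · exact absurd h.symm (hab j i)
  · rw [hb h]

lemma exists_of_mem_cycArcs_interleave [NeZero n] {p : α × α}
    (hp : p ∈ cycArcs (List.ofFn (interleave a b))) :
    ∃ i, p = (a i, b i) ∨ p = (b i, a (i + 1)) := by
  obtain ⟨m, rfl⟩ := (mem_cycArcs_ofFn _).mp hp
  have hval (k : ℕ) (hk : k < 2 * n) :
      ((⟨k, hk⟩ + 1 : Fin (2 * n)) : ℕ) = (k + 1) % (2 * n) := by
    rw [Fin.val_add, Fin.val_one', Nat.add_mod_mod]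
  obtain ⟨i, rfl | rfl⟩ := Fin.exists_eq_two_mul_or_eq_two_mul_add_one m
  · refine ⟨i, Or.inl ?_⟩
    rw [show (⟨2 * i, _⟩ + 1 : Fin (2 * n)) = ⟨2 * i + 1, by omega⟩ from
      Fin.ext ((hval _ _).trans (Nat.mod_eq_of_lt (by omega)))]
    simp
  · refine ⟨i, Or.inr ?_⟩
    have hi : ((i + 1 : Fin n) : ℕ) = (i + 1) % n := by
      rw [Fin.val_add, Fin.val_one', Nat.add_mod_mod]
    rw [show (⟨2 * i + 1, _⟩ + 1 : Fin (2 * n)) =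
        ⟨2 * (i + 1 : Fin n), by have := (i + 1 : Fin n).isLt; omega⟩ from
      Fin.ext ((hval _ _).trans (by simp only [hi, ← Nat.mul_mod_mul_left]; ring_nf))]
    simp

end Interleave

namespace completeBipartiteDigraph

variable {t z : ℕ}

lemma mem_map_inl_of_adj_inr {y : Fin z} {w : Fin t ⊕ Fin z}
    (h : (completeBipartiteDigraph t z).Adj (.inr y) w) :
    w ∈ (Finset.univ : Finset (Fin t)).map .inl := by
  cases w with
  | inl x => simp
  | inr y' => exact absurd rfl h

lemma lambdaS_le {S : Set (Fin t ⊕ Fin z)} {y : Fin z} (hy : .inr y ∈ S) :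
    lambdaS (completeBipartiteDigraph t z) S ≤ t := by
  simpa using lambdaS_le_card_of_adj hy fun _ => mem_map_inl_of_adj_inr

lemma card_le_of_isDiCycle {l : List (Fin t ⊕ Fin z)}
    (hl : IsDiCycle (completeBipartiteDigraph t z) l) {T : Finset (Fin z)}
    (hT : ∀ y ∈ T, .inr y ∈ l) : T.card ≤ t := by
  have hA : ∀ x ∈ T.map .inr, x ∈ l := by simpa using hT
  have hB : ∀ x ∈ T.map .inr, ∀ w, (completeBipartiteDigraph t z).Adj x w →
      w ∈ (Finset.univ : Finset (Fin t)).map .inl := by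
    simp only [Finset.forall_mem_map, Function.Embedding.inr_apply]
    exact fun _ _ _ => mem_map_inl_of_adj_inr
  simpa using hl.card_le_card_of_adj hA hB

lemma lambdaS_eq_zero_of_card_lt {S : Set (Fin t ⊕ Fin z)} {T : Finset (Fin z)}
    (hT : t < T.card) (hTS : ∀ y ∈ T, .inr y ∈ S) :
    lambdaS (completeBipartiteDigraph t z) S = 0 :=
  lambdaS_eq_zero fun _ hl => (card_le_of_isDiCycle hl.1 fun y hy => hl.2 _ (hTS y hy)).not_gt hT

/-- The cycle `g 0, j, g 1, 1 + j, …, g (t - 1), (t - 1) + j`. -/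
def cycle (g : Fin t → Fin z) (j : Fin t) : List (Fin t ⊕ Fin z) :=
  List.ofFn (interleave (Sum.inr ∘ g) fun i => Sum.inl (i + j))

variable {g : Fin t → Fin z}

lemma isSCycle_cycle (hg : g.Injective) {S : Set (Fin t ⊕ Fin z)}
    (hS : ∀ y, .inr y ∈ S → y ∈ Set.range g) (j : Fin t) :
    IsSCycle (completeBipartiteDigraph t z) S (cycle g j) := by
  have : NeZero t := ⟨j.pos.ne'⟩
  have hinl : (fun i => Sum.inl (i + j) : Fin t → Fin t ⊕ Fin z).Injective :=
    fun _ _ h => add_right_cancel (Sum.inl_injective h)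
  refine ⟨⟨List.nodup_ofFn.mpr (interleave_injective (Sum.inr_injective.comp hg) hinl
    fun _ _ => Sum.inr_ne_inl), ?_, ?_⟩, ?_⟩
  · simp only [cycle, List.length_ofFn]
    have := j.pos
    omega
  · intro p hp
    obtain ⟨i, rfl | rfl⟩ := exists_of_mem_cycArcs_interleave hp <;>
      simp [completeBipartiteDigraph]
  · intro s hs
    rw [cycle, List.mem_ofFn, ← Set.mem_range, range_interleave]
    cases s with
    | inl x => exact Or.inr ⟨x - j, by simp⟩
    | inr y =>
      obtain ⟨i, rfl⟩ := hS y hs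
      exact Or.inl ⟨i, rfl⟩

lemma disjoint_cycArcs_cycle (hg : g.Injective) {j j' : Fin t} (hj : j ≠ j') :
    Disjoint (cycArcs (cycle g j)) (cycArcs (cycle g j')) := by
  have : NeZero t := ⟨j.pos.ne'⟩
  refine Set.disjoint_left.mpr fun p hp hp' => hj ?_
  obtain ⟨i, rfl | rfl⟩ := exists_of_mem_cycArcs_interleave hp <;>
  obtain ⟨i', h | h⟩ := exists_of_mem_cycArcs_interleave hp' <;>
  simp only [Function.comp_apply, Prod.mk.injEq, Sum.inr.injEq, Sum.inl.injEq, reduceCtorEq,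
    and_false] at h
  · obtain rfl := hg h.1
    exact add_left_cancel h.2
  · obtain rfl := add_right_cancel (hg h.2)
    exact add_left_cancel h.1

lemma arcDisjointSCycles (hg : g.Injective) {S : Set (Fin t ⊕ Fin z)}
    (hS : ∀ y, .inr y ∈ S → y ∈ Set.range g) :
    ArcDisjointSCycles (completeBipartiteDigraph t z) S t :=
  ⟨cycle g, isSCycle_cycle hg hS, fun _ _ => disjoint_cycArcs_cycle hg⟩

lemma le_lambdaS (htz : t ≤ z) {S : Finset (Fin t ⊕ Fin z)} (hS : S.card ≤ t)
    (hne : S.Nonempty) : t ≤ lambdaS (completeBipartiteDigraph t z) ↑S := by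
  obtain ⟨U, hSU, -, hU⟩ := Finset.exists_subsuperset_card_eq (Finset.subset_univ S.toRight)
    (Finset.card_toRight_le.trans hS) (by simpa using htz)
  obtain ⟨v, hv⟩ := hne
  refine _root_.le_lambdaS (Finset.mem_coe.mpr hv)
    (arcDisjointSCycles (U.orderEmbOfFin hU).injective fun y hy => ?_)
  rw [Finset.range_orderEmbOfFin]
  exact hSU (Finset.mem_toRight.mpr hy)

end completeBipartiteDigraph

open completeBipartiteDigraph in
theorem lambdaK_completeBipartiteDigraph_general (t z : ℕ) (htz : t < z) :
    (∀ k, 2 ≤ k → k ≤ t → lambdaK (completeBipartiteDigraph t z) k = t) ∧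
    (∀ k, t + 1 ≤ k → k ≤ t + z → lambdaK (completeBipartiteDigraph t z) k = 0) := by
  refine ⟨fun k hk hkt => lambdaK_eq ?_ fun S hS => ?_,
    fun k hk hkz => lambdaK_eq ?_ fun _ _ => Nat.zero_le _⟩
  · obtain ⟨S, hyS, -, hS⟩ := Finset.exists_subsuperset_card_eq (n := k)
      (Finset.subset_univ {(.inr ⟨0, by omega⟩ : Fin t ⊕ Fin z)})
      (by simp; omega) (by simp; omega)
    exact ⟨S, hS, lambdaS_le (hyS (Finset.mem_singleton_self _))⟩
  · exact le_lambdaS htz.le (hS.trans_le hkt) (Finset.card_pos.mp (by omega))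
  · let T : Finset (Fin z) := Finset.univ.map (Fin.castLEEmb htz)
    obtain ⟨S, hTS, -, hS⟩ := Finset.exists_subsuperset_card_eq (n := k)
      (Finset.subset_univ (T.map (.inr : Fin z ↪ Fin t ⊕ Fin z)))
      (by simpa [T] using hk) (by simpa using hkz)
    refine ⟨S, hS, (lambdaS_eq_zero_of_card_lt (T := T) (by simp [T]) fun y hy => ?_).le⟩
    exact hTS (Finset.mem_map_of_mem _ hy)

/-- For `2 ≤ t < z`, `λ_k^c(K↔_{t,z}) = t` for every `2 ≤ k ≤ t`
and `λ_k^c(K↔_{t,z}) = 0` for every `t + 1 ≤ k ≤ t + z`. -/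
theorem lambdaK_completeBipartiteDigraph (t z : ℕ) (ht : 2 ≤ t) (htz : t < z) :
    (∀ k, 2 ≤ k → k ≤ t → lambdaK (completeBipartiteDigraph t z) k = t) ∧
    (∀ k, t + 1 ≤ k → k ≤ t + z → lambdaK (completeBipartiteDigraph t z) k = 0) :=
  lambdaK_completeBipartiteDigraph_general t z htz
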